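/- Let f be analytic on D_δ with ε = ‖f − id‖_{D_δ} and ε/δ ≤ 1/(6e). Then for 2 ≤ m ≤ δ/(6eε) + 1, the interpolating vector field X_m(x) = ∑_{k=1}^m ((−1)^{k−1}/k) Δ_k(x) is analytic on D_{δ/3} and satisfies ‖X_m‖_{D_{δ/3}} ≤ 2ε. -/

import Mathlib

/-- The complex `r`-neighbourhood of a set `D₀ ⊆ ℂⁿ` in the infinity norm. -/
def cnbhd (n : ℕ) (D0 : Set (Fin n → ℂ)) (r : ℝ) : Set (Fin n → ℂ) :=
  {x | ∃ y ∈ D0, ‖x - y‖ ≤ r}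

lemma cnbhd_mono (n : ℕ) (D0 : Set (Fin n → ℂ)) {r s : ℝ} (h : r ≤ s) :
    cnbhd n D0 r ⊆ cnbhd n D0 s := by
  rintro x ⟨y, hy, hxy⟩; exact ⟨y, hy, hxy.trans h⟩

lemma mem_cnbhd_add {n : ℕ} {D0 : Set (Fin n → ℂ)} {r s : ℝ} {x z : Fin n → ℂ}
    (hx : x ∈ cnbhd n D0 r) (h : ‖z - x‖ ≤ s) : z ∈ cnbhd n D0 (r + s) := by
  obtain ⟨y, hy, hxy⟩ := hx
  refine ⟨y, hy, ?_⟩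
  have hzy : z - y = (z - x) + (x - y) := by abel
  rw [hzy]
  calc ‖(z - x) + (x - y)‖ ≤ ‖z - x‖ + ‖x - y‖ := norm_add_le _ _
    _ ≤ r + s := by linarith

set_option maxHeartbeats 1600000 in
/-- If `f` is analytic on `D_δ` with `‖f - id‖_{D_δ} ≤ ε` and `ε/δ ≤ 1/(6e)`,
then for `2 ≤ m ≤ δ/(6eε) + 1` the interpolating vector field
`X_m = ∑_{k=1}^m ((-1)^{k-1}/k) Δ_k` is analytic on `D_{δ/3}` and
`‖X_m‖_{D_{δ/3}} ≤ 2ε`. -/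
theorem interpolating_field_analytic_and_bounded (n : ℕ)
    (D0 : Set (Fin n → ℂ)) (δ ε : ℝ) (hδ : 0 < δ) (hε : 0 < ε)
    (f : (Fin n → ℂ) → (Fin n → ℂ))
    (hf : DifferentiableOn ℂ f (cnbhd n D0 δ))
    (hfε : ∀ x ∈ cnbhd n D0 δ, ‖f x - x‖ ≤ ε)
    (hεδ : ε / δ ≤ 1 / (6 * Real.exp 1))
    (m : ℕ) (hm2 : 2 ≤ m) (hmM : (m : ℝ) ≤ δ / (6 * Real.exp 1 * ε) + 1)
    (Δ : ℕ → (Fin n → ℂ) → (Fin n → ℂ))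
    (hΔ0 : ∀ x, Δ 0 x = x)
    (hΔ : ∀ k x, Δ (k + 1) x = Δ k (f x) - Δ k x)
    (X : (Fin n → ℂ) → (Fin n → ℂ))
    (hX : ∀ x, X x = ∑ k ∈ Finset.Icc 1 m, ((-1 : ℂ) ^ (k - 1) / (k : ℂ)) • Δ k x) :
    DifferentiableOn ℂ X (cnbhd n D0 (δ / 3)) ∧
      ∀ x ∈ cnbhd n D0 (δ / 3), ‖X x‖ ≤ 2 * ε := by
  set E := Real.exp 1 with hE
  have hE2 : (2 : ℝ) ≤ E := by
    have := Real.add_one_le_exp (1 : ℝ); rw [hE]; linarith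
  have hEpos : (0 : ℝ) < E := by linarith
  have h6E : (0 : ℝ) < 6 * E := by linarith
  -- ε ≤ δ/(6E) ≤ δ/12
  have hεδ' : ε * (6 * E) ≤ δ := by
    have := (div_le_div_iff₀ hδ h6E).mp hεδ
    linarith
  have hε12 : ε ≤ δ / 12 := by
    nlinarith [mul_nonneg hε.le (by linarith : (0:ℝ) ≤ 6 * E - 12)]
  -- (m-1)ε ≤ δ/(6E) ≤ δ/12
  have hm1 : ((m : ℝ) - 1) ≤ δ / (6 * E * ε) := by linarith
  have hmε : ((m : ℝ) - 1) * ε ≤ δ / 12 := by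
    have h1 : ((m : ℝ) - 1) * ε ≤ δ / (6 * E * ε) * ε :=
      mul_le_mul_of_nonneg_right hm1 hε.le
    have h2 : δ / (6 * E * ε) * ε = δ / (6 * E) := by
      field_simp
    rw [h2] at h1
    have h3 : δ / (6 * E) ≤ δ / 12 := by
      apply div_le_div_of_nonneg_left hδ.le (by norm_num) (by linarith)
    linarith
  -- f maps cnbhd r into cnbhd (r+ε) when r ≤ δ
  have hfmaps : ∀ r : ℝ, r ≤ δ → ∀ x ∈ cnbhd n D0 r, f x ∈ cnbhd n D0 (r + ε) := by
    intro r hr x hx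
    exact mem_cnbhd_add hx (hfε x (cnbhd_mono n D0 hr hx))
  -- differentiability of Δ k
  have hdiff : ∀ k : ℕ, ∀ r : ℝ, r + (k : ℝ) * ε ≤ δ →
      DifferentiableOn ℂ (Δ k) (cnbhd n D0 r) := by
    intro k
    induction k with
    | zero =>
      intro r _
      have h0 : Δ 0 = id := funext hΔ0
      rw [h0]; exact differentiableOn_id
    | succ k ih =>
      intro r hr
      have hkr : (0 : ℝ) ≤ (k : ℝ) * ε := by positivity
      have hrδ : r ≤ δ := by push_cast at hr ⊢; nlinarith
      have hr' : (r + ε) + (k : ℝ) * ε ≤ δ := by push_cast at hr ⊢; linarith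
      have hΔk1 : Δ (k + 1) = fun x => Δ k (f x) - Δ k x := funext (hΔ k)
      rw [hΔk1]
      have h1 : DifferentiableOn ℂ (fun x => Δ k (f x)) (cnbhd n D0 r) := by
        exact (ih (r + ε) hr').comp (hf.mono (cnbhd_mono n D0 hrδ))
          (fun x hx => hfmaps r hrδ x hx)
      have h2 : DifferentiableOn ℂ (Δ k) (cnbhd n D0 r) := by
        refine ih r ?_
        push_cast at hr; linarith
      exact h1.sub h2
  -- key domain inequality
  have key : ∀ k : ℕ, 1 ≤ k → k ≤ m →
      δ / 3 + ((m : ℝ) - k) * (4 * ε) + (k : ℝ) * ε ≤ δ := by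
    intro k hk1 hkm
    have h1 : (1 : ℝ) ≤ (k : ℝ) := by exact_mod_cast hk1
    have h2 : (k : ℝ) ≤ (m : ℝ) := by exact_mod_cast hkm
    nlinarith [mul_nonneg (sub_nonneg.2 h1) hε.le]
  -- the main bound by induction
  have hbound : ∀ k : ℕ, 1 ≤ k → k ≤ m →
      ∀ x ∈ cnbhd n D0 (δ / 3 + ((m : ℝ) - k) * (4 * ε)),
        ‖Δ k x‖ ≤ ε / 2 ^ (k - 1) := by
    intro k
    induction k with
    | zero => intro h; omega
    | succ k ih =>
      intro _ hkm x hx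
      have hρ : δ / 3 + ((m : ℝ) - (k + 1 : ℕ)) * (4 * ε) + ((k + 1 : ℕ) : ℝ) * ε ≤ δ :=
        key (k + 1) (by omega) hkm
      have hρδ : δ / 3 + ((m : ℝ) - (k + 1 : ℕ)) * (4 * ε) ≤ δ := by
        have : (0 : ℝ) ≤ ((k + 1 : ℕ) : ℝ) * ε := by positivity
        linarith
      have hxδ : x ∈ cnbhd n D0 δ := cnbhd_mono n D0 hρδ hx
      have hfx : ‖f x - x‖ ≤ ε := hfε x hxδ
      rcases Nat.eq_zero_or_pos k with hk0 | hk1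
      · -- base case k+1 = 1
        subst hk0
        have h1 : Δ 1 x = f x - x := by
          rw [hΔ 0 x, hΔ0, hΔ0]
        rw [h1]
        simpa using hfx
      · -- inductive step
        have hkm' : k ≤ m := by omega
        set ρ := δ / 3 + ((m : ℝ) - k) * (4 * ε) with hρdef
        have hρeq : δ / 3 + ((m : ℝ) - (k + 1 : ℕ)) * (4 * ε) + 4 * ε = ρ := by
          push_cast [hρdef]; ring
        -- Δ k is differentiable on cnbhd ρ
        have hρk : ρ + (k : ℝ) * ε ≤ δ := by
          have h1 : (1 : ℝ) ≤ (k : ℝ) := by exact_mod_cast hk1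
          have h2 : (k : ℝ) ≤ (m : ℝ) := by exact_mod_cast hkm'
          rw [hρdef]
          nlinarith [mul_nonneg (sub_nonneg.2 h1) hε.le]
        have hdk : DifferentiableOn ℂ (Δ k) (cnbhd n D0 ρ) := hdiff k ρ hρk
        set v := f x - x with hv
        rcases eq_or_ne v 0 with hv0 | hv0
        · -- f x = x, so Δ (k+1) x = 0
          have hfxx : f x = x := by
            have := sub_eq_zero.mp hv0
            exact this
          have : Δ (k + 1) x = 0 := by rw [hΔ k x, hfxx, sub_self]
          rw [this, norm_zero]
          positivity
        · have hvpos : 0 < ‖v‖ := norm_pos_iff.mpr hv0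
          set R := 4 * ε / ‖v‖ with hR
          have hvε : ‖v‖ ≤ ε := hfx
          have hR1 : 1 < R := by
            rw [hR, lt_div_iff₀ hvpos]
            linarith
          set φ := fun z : ℂ => Δ k (x + z • v) with hφ
          -- φ is differentiable on ball 0 R and maps into cnbhd ρ
          have hmapsφ : ∀ z : ℂ, z ∈ Metric.ball (0 : ℂ) R →
              x + z • v ∈ cnbhd n D0 ρ := by
            intro z hz
            rw [Metric.mem_ball, dist_zero_right] at hz
            have hzv : ‖(x + z • v) - x‖ ≤ 4 * ε := by
              have : (x + z • v) - x = z • v := by abel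
              rw [this, norm_smul]
              have : ‖z‖ * ‖v‖ < R * ‖v‖ := by
                exact mul_lt_mul_of_pos_right hz hvpos
              rw [hR] at this
              rw [div_mul_cancel₀] at this
              · exact this.le
              · exact hvpos.ne'
            rw [← hρeq]
            exact mem_cnbhd_add hx hzv
          have hφd : DifferentiableOn ℂ φ (Metric.ball (0 : ℂ) R) := by
            have hinner : Differentiable ℂ (fun z : ℂ => x + z • v) := by
              exact (differentiable_id.smul_const v).const_add x
            exact hdk.comp hinner.differentiableOn (fun z hz => hmapsφ z hz)
          -- value identities
          have hφ1 : φ 1 = Δ k (f x) := by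
            have hxv : x + (1 : ℂ) • v = f x := by rw [one_smul, hv]; abel
            show Δ k (x + (1 : ℂ) • v) = Δ k (f x)
            rw [hxv]
          have hφ0 : φ 0 = Δ k x := by
            rw [hφ]; simp
          have hΔk1x : Δ (k + 1) x = φ 1 - φ 0 := by
            rw [hΔ k x, hφ1, hφ0]
          -- the bound via Schwarz, with an η of slack
          set M := ε / 2 ^ (k - 1) with hM
          have hMpos : 0 < M := by rw [hM]; positivity
          have hφle : ∀ z : ℂ, z ∈ Metric.ball (0 : ℂ) R → ‖φ z‖ ≤ M := by
            intro z hz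
            exact ih hk1 hkm' _ (hmapsφ z hz)
          have hfinal : ‖Δ (k + 1) x‖ ≤ M / 2 := by
            refine le_of_forall_pos_le_add ?_
            intro η hη
            have hmaps2 : Set.MapsTo φ (Metric.ball (0 : ℂ) R)
                (Metric.ball (φ 0) (2 * M + 2 * η)) := by
              intro z hz
              rw [Metric.mem_ball, dist_eq_norm]
              have h0ball : (0 : ℂ) ∈ Metric.ball (0 : ℂ) R := by
                rw [Metric.mem_ball, dist_self]; linarith
              calc ‖φ z - φ 0‖ ≤ ‖φ z‖ + ‖φ 0‖ := norm_sub_le _ _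
                _ ≤ M + M := add_le_add (hφle z hz) (hφle 0 h0ball)
                _ < 2 * M + 2 * η := by linarith
            have h1ball : (1 : ℂ) ∈ Metric.ball (0 : ℂ) R := by
              rw [Metric.mem_ball, dist_zero_right, norm_one]; exact hR1
            have := Complex.dist_le_div_mul_dist_of_mapsTo_ball hφd (hmaps2.mono_right Metric.ball_subset_closedBall) h1ball
            rw [dist_zero_right, norm_one, mul_one] at this
            have hd : dist (φ 1) (φ 0) = ‖Δ (k + 1) x‖ := by
              rw [dist_eq_norm, hΔk1x]
            rw [hd] at this
            have hRge4 : (4 : ℝ) ≤ R := by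
              rw [hR, le_div_iff₀ hvpos]
              nlinarith
            have hRpos : (0 : ℝ) < R := by linarith
            have h2 : (2 * M + 2 * η) / R ≤ (2 * M + 2 * η) / 4 := by
              gcongr
            calc ‖Δ (k + 1) x‖ ≤ (2 * M + 2 * η) / R := this
              _ ≤ (2 * M + 2 * η) / 4 := h2
              _ ≤ M / 2 + η := by linarith
          -- rewrite M/2 as ε / 2^k
          have hkk : k - 1 + 1 = k := by omega
          have hMk : M / 2 = ε / 2 ^ k := by
            rw [hM, div_div, ← pow_succ, hkk]
          rw [Nat.add_sub_cancel, ← hMk]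
          exact hfinal
  -- conclusion
  constructor
  · -- differentiability of X
    have hXeq : X = fun x => ∑ k ∈ Finset.Icc 1 m,
        ((-1 : ℂ) ^ (k - 1) / (k : ℂ)) • Δ k x := funext hX
    rw [hXeq]
    apply DifferentiableOn.fun_sum
    intro k hk
    rw [Finset.mem_Icc] at hk
    have hkm : (k : ℝ) ≤ (m : ℝ) := by exact_mod_cast hk.2
    have : δ / 3 + (k : ℝ) * ε ≤ δ := by
      have h1 : (1 : ℝ) ≤ (k : ℝ) := by exact_mod_cast hk.1
      nlinarith [mul_nonneg (sub_nonneg.2 h1) hε.le]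
    exact (hdiff k (δ / 3) this).fun_const_smul _
  · -- the bound on X
    intro x hx
    rw [hX x]
    have hterm : ∀ k ∈ Finset.Icc 1 m,
        ‖((-1 : ℂ) ^ (k - 1) / (k : ℂ)) • Δ k x‖ ≤ ε * (1 / 2) ^ (k - 1) := by
      intro k hk
      rw [Finset.mem_Icc] at hk
      have hk1 : (1 : ℝ) ≤ (k : ℝ) := by exact_mod_cast hk.1
      have hkm : (k : ℝ) ≤ (m : ℝ) := by exact_mod_cast hk.2
      have hxk : x ∈ cnbhd n D0 (δ / 3 + ((m : ℝ) - k) * (4 * ε)) := by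
        apply cnbhd_mono n D0 _ hx
        nlinarith
      have hΔb : ‖Δ k x‖ ≤ ε / 2 ^ (k - 1) := hbound k hk.1 hk.2 x hxk
      have hc : ‖((-1 : ℂ) ^ (k - 1) / (k : ℂ))‖ ≤ 1 := by
        rw [norm_div, norm_pow, norm_neg, norm_one, one_pow]
        rw [Complex.norm_natCast]
        rw [div_le_one (by linarith)]
        exact hk1
      calc ‖((-1 : ℂ) ^ (k - 1) / (k : ℂ)) • Δ k x‖
          = ‖((-1 : ℂ) ^ (k - 1) / (k : ℂ))‖ * ‖Δ k x‖ := norm_smul _ _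
        _ ≤ 1 * (ε / 2 ^ (k - 1)) := mul_le_mul hc hΔb (norm_nonneg _) zero_le_one
        _ = ε * (1 / 2) ^ (k - 1) := by
            rw [one_mul, div_pow, one_pow]; ring
    calc ‖∑ k ∈ Finset.Icc 1 m, ((-1 : ℂ) ^ (k - 1) / (k : ℂ)) • Δ k x‖
        ≤ ∑ k ∈ Finset.Icc 1 m, ‖((-1 : ℂ) ^ (k - 1) / (k : ℂ)) • Δ k x‖ :=
          norm_sum_le _ _
      _ ≤ ∑ k ∈ Finset.Icc 1 m, ε * (1 / 2) ^ (k - 1) := Finset.sum_le_sum hterm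
      _ = ε * ∑ k ∈ Finset.Icc 1 m, (1 / 2 : ℝ) ^ (k - 1) := by rw [Finset.mul_sum]
      _ ≤ ε * 2 := by
          apply mul_le_mul_of_nonneg_left _ hε.le
          have h1 : ∑ k ∈ Finset.Icc 1 m, (1 / 2 : ℝ) ^ (k - 1)
              = ∑ j ∈ Finset.range m, (1 / 2 : ℝ) ^ j := by
            rw [← Finset.Ico_add_one_right_eq_Icc, Finset.sum_Ico_eq_sum_range]
            simp
          rw [h1]
          exact sum_geometric_two_le m
      _ = 2 * ε := by ring
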